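/- arXiv:2010.14663 — 2 statements merged into one kernel-verified Lean document; each statement's English description precedes it below -/
import Mathlib

section
/- Let k ≥ 1 and n ≥ 1. Then R_k(n) = (Σ_{i=1}^{n−1} k^{2n−2i}·u_i) − M_k(n). -/
open Classical Finset Filter

/-- A border of `w`: a non-empty word that is both a proper prefix and a suffix of `w`. -/
def IsBorder {k : ℕ} (w b : List (Fin k)) : Prop :=
  b ≠ [] ∧ b ≠ w ∧ b <+: w ∧ b <:+ w

/-- A word is unbordered if it has no border. -/
def Unbordered {k : ℕ} (w : List (Fin k)) : Prop :=
  ∀ b, ¬ IsBorder w b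

/-- A right-border of `(u,v)`: a non-empty proper suffix of `u` that is a proper prefix of `v`. -/
def IsRightBorder {k : ℕ} (u v b : List (Fin k)) : Prop :=
  b ≠ [] ∧ b <:+ u ∧ b ≠ u ∧ b <+: v ∧ b ≠ v

/-- A left-border of `(u,v)`: a non-empty proper prefix of `u` that is a proper suffix of `v`. -/
def IsLeftBorder {k : ℕ} (u v b : List (Fin k)) : Prop :=
  b ≠ [] ∧ b <+: u ∧ b ≠ u ∧ b <:+ v ∧ b ≠ v

def MutuallyBordered {k : ℕ} (u v : List (Fin k)) : Prop :=
  (∃ b, IsRightBorder u v b) ∧ (∃ b, IsLeftBorder u v b)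

def MutuallyUnbordered {k : ℕ} (u v : List (Fin k)) : Prop :=
  (¬ ∃ b, IsRightBorder u v b) ∧ (¬ ∃ b, IsLeftBorder u v b)

def RightBordered {k : ℕ} (u v : List (Fin k)) : Prop :=
  (∃ b, IsRightBorder u v b) ∧ (¬ ∃ b, IsLeftBorder u v b)

/-- `lso u v`: the length of the shortest right-border of `(u,v)`, or `0` if there is none. -/
noncomputable def lso {k : ℕ} (u v : List (Fin k)) : ℕ :=
  sInf {m | ∃ b : List (Fin k), IsRightBorder u v b ∧ b.length = m}

def IsShortestRightBorder {k : ℕ} (u v b : List (Fin k)) : Prop :=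
  IsRightBorder u v b ∧ ∀ b', IsRightBorder u v b' → b.length ≤ b'.length

def IsShortestLeftBorder {k : ℕ} (u v b : List (Fin k)) : Prop :=
  IsLeftBorder u v b ∧ ∀ b', IsLeftBorder u v b' → b.length ≤ b'.length

/-- The finite set of all length-`n` words over `Σ_k`. -/
def Words (k n : ℕ) : Finset (List (Fin k)) :=
  (Finset.univ : Finset (Fin n → Fin k)).image List.ofFn

/-- `UB k n`: the number of unbordered words of length `n` over `Σ_k`. -/
noncomputable def UB (k n : ℕ) : ℕ :=
  ((Words k n).filter Unbordered).card

/-- `M k n`: the number of mutually bordered pairs of length-`n` words over `Σ_k`. -/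
noncomputable def M (k n : ℕ) : ℕ :=
  ((Words k n ×ˢ Words k n).filter (fun p => MutuallyBordered p.1 p.2)).card

/-- `R k n`: the number of right-bordered pairs of length-`n` words over `Σ_k`. -/
noncomputable def R (k n : ℕ) : ℕ :=
  ((Words k n ×ˢ Words k n).filter (fun p => RightBordered p.1 p.2)).card

/-- `U k n`: the number of mutually unbordered pairs of length-`n` words over `Σ_k`. -/
noncomputable def U (k n : ℕ) : ℕ :=
  ((Words k n ×ˢ Words k n).filter (fun p => MutuallyUnbordered p.1 p.2)).card

/-- `G u v m`: the number of unbordered words of length `m` over `Σ_k` having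
`u` as a prefix and `v` as a suffix. -/
noncomputable def G {k : ℕ} (u v : List (Fin k)) (m : ℕ) : ℕ :=
  ((Words k m).filter (fun w => Unbordered w ∧ u <+: w ∧ v <:+ w)).card

/-!
A pair with a right-border has a shortest one, and it is unbordered: a border of it would be a
shorter right-border. Conversely two distinct non-empty unbordered words cannot both be
right-borders of the same pair, since the shorter would be a border of the longer. Hence the
pairs of length-`n` words with a right-border are partitioned according to their unbordered
right-border `b`, and each `b` of length `i ∈ [1, n - 1]` is the right-border of exactly
`k ^ (2n - 2i)` pairs. These pairs are the right-bordered ones together with the mutually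
bordered ones.
-/

variable {k : ℕ}

@[simp]
lemma mem_Words {m : ℕ} {w : List (Fin k)} : w ∈ Words k m ↔ w.length = m := by
  simp only [Words, mem_image, mem_univ, true_and]
  constructor
  · rintro ⟨f, rfl⟩
    exact List.length_ofFn
  · rintro rfl
    exact ⟨w.get, List.ofFn_get w⟩

lemma card_Words (k m : ℕ) : #(Words k m) = k ^ m := by
  rw [Words, card_image_of_injective _ List.ofFn_injective, card_univ, Fintype.card_fun,
    Fintype.card_fin, Fintype.card_fin]

lemma filter_isPrefix_Words {n : ℕ} {b : List (Fin k)} (h : b.length ≤ n) :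
    (Words k n).filter (b <+: ·) = (Words k (n - b.length)).image (b ++ ·) := by
  ext v
  simp only [mem_filter, mem_image, mem_Words]
  constructor
  · rintro ⟨rfl, w, rfl⟩
    exact ⟨w, by simp, rfl⟩
  · rintro ⟨w, hw, rfl⟩
    exact ⟨by simp; omega, w, rfl⟩

lemma filter_isSuffix_Words {n : ℕ} {b : List (Fin k)} (h : b.length ≤ n) :
    (Words k n).filter (b <:+ ·) = (Words k (n - b.length)).image (· ++ b) := by
  ext u
  simp only [mem_filter, mem_image, mem_Words]
  constructor
  · rintro ⟨rfl, w, rfl⟩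
    exact ⟨w, by simp, rfl⟩
  · rintro ⟨w, hw, rfl⟩
    exact ⟨by simp; omega, w, rfl⟩

lemma card_filter_isPrefix_Words {n : ℕ} {b : List (Fin k)} (h : b.length ≤ n) :
    #((Words k n).filter (b <+: ·)) = k ^ (n - b.length) := by
  rw [filter_isPrefix_Words h, card_image_of_injective _ (List.append_right_injective b),
    card_Words]

lemma card_filter_isSuffix_Words {n : ℕ} {b : List (Fin k)} (h : b.length ≤ n) :
    #((Words k n).filter (b <:+ ·)) = k ^ (n - b.length) := by
  rw [filter_isSuffix_Words h, card_image_of_injective _ (List.append_left_injective b),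
    card_Words]

noncomputable def overlapPairs (k n : ℕ) (b : List (Fin k)) :
    Finset (List (Fin k) × List (Fin k)) :=
  (Words k n ×ˢ Words k n).filter fun p => b <:+ p.1 ∧ b <+: p.2

lemma card_overlapPairs {n : ℕ} {b : List (Fin k)} (h : b.length ≤ n) :
    #(overlapPairs k n b) = k ^ (2 * n - 2 * b.length) := by
  rw [overlapPairs, filter_product, card_product, card_filter_isSuffix_Words h,
    card_filter_isPrefix_Words h, ← pow_add]
  congr 1
  omega

lemma isRightBorder_iff {n : ℕ} {u v b : List (Fin k)} (hu : u.length = n) (hv : v.length = n) :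
    IsRightBorder u v b ↔ b <:+ u ∧ b <+: v ∧ b.length ∈ Icc 1 (n - 1) := by
  rw [mem_Icc]
  constructor
  · rintro ⟨hb, hbu, hbu', hbv, -⟩
    have := hbu.length_le
    have := List.length_pos_iff.2 hb
    have := mt hbu.eq_of_length hbu'
    exact ⟨hbu, hbv, by omega, by omega⟩
  · rintro ⟨hbu, hbv, hpos, hlt⟩
    refine ⟨List.length_pos_iff.1 hpos, hbu, ?_, hbv, ?_⟩ <;> rintro rfl <;> omega

lemma exists_isShortestRightBorder {u v : List (Fin k)} (h : ∃ b, IsRightBorder u v b) :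
    ∃ b, IsShortestRightBorder u v b := by
  have hm : ∃ m, ∃ b, IsRightBorder u v b ∧ b.length = m :=
    let ⟨b, hb⟩ := h
    ⟨_, b, hb, rfl⟩
  obtain ⟨b, hb, hlen⟩ := Nat.find_spec hm
  exact ⟨b, hb, fun b' hb' => hlen ▸ Nat.find_min' hm ⟨b', hb', rfl⟩⟩

lemma IsShortestRightBorder.unbordered {u v b : List (Fin k)} (h : IsShortestRightBorder u v b) :
    Unbordered b := by
  obtain ⟨⟨-, hbu, -, hbv, -⟩, hmin⟩ := h
  rintro c ⟨hc, hcb, hcp, hcs⟩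
  have hlt : c.length < b.length := lt_of_le_of_ne hcp.length_le (mt hcp.eq_of_length hcb)
  have := hbu.length_le
  have := hbv.length_le
  have hc_rb : IsRightBorder u v c :=
    ⟨hc, hcs.trans hbu, by rintro rfl; omega, hcp.trans hbv, by rintro rfl; omega⟩
  exact absurd (hmin c hc_rb) (not_le.2 hlt)

lemma Unbordered.eq_of_isSuffix_of_isPrefix {u v b b' : List (Fin k)}
    (hb : Unbordered b) (hb' : Unbordered b') (h0 : b ≠ []) (h0' : b' ≠ [])
    (hu : b <:+ u) (hu' : b' <:+ u) (hv : b <+: v) (hv' : b' <+: v) : b = b' := by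
  wlog hle : b.length ≤ b'.length generalizing b b'
  · exact (this hb' hb h0' h0 hu' hu hv' hv (by omega)).symm
  by_contra hne
  exact hb' b ⟨h0, hne, List.prefix_of_prefix_length_le hv hv' hle,
    List.suffix_of_suffix_length_le hu hu' hle⟩

lemma disjoint_overlapPairs {n : ℕ} {b b' : List (Fin k)} (hb : Unbordered b)
    (hb' : Unbordered b') (h0 : b ≠ []) (h0' : b' ≠ []) (hne : b ≠ b') :
    Disjoint (overlapPairs k n b) (overlapPairs k n b') := by
  rw [disjoint_left]
  rintro ⟨u, v⟩ hp hp'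
  simp only [overlapPairs, mem_filter] at hp hp'
  exact hne (hb.eq_of_isSuffix_of_isPrefix hb' h0 h0' hp.2.1 hp'.2.1 hp.2.2 hp'.2.2)

noncomputable def pairsWithRightBorder (k n : ℕ) : Finset (List (Fin k) × List (Fin k)) :=
  (Words k n ×ˢ Words k n).filter fun p => ∃ b, IsRightBorder p.1 p.2 b

lemma pairsWithRightBorder_eq_biUnion (k n : ℕ) :
    pairsWithRightBorder k n =
      ((Icc 1 (n - 1)).biUnion fun i => (Words k i).filter Unbordered).biUnion
        (overlapPairs k n) := by
  ext ⟨u, v⟩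
  simp only [pairsWithRightBorder, overlapPairs, mem_biUnion, mem_filter, mem_product, mem_Words]
  constructor
  · rintro ⟨⟨hu, hv⟩, hrb⟩
    obtain ⟨b, hb⟩ := exists_isShortestRightBorder hrb
    obtain ⟨hbu, hbv, hlen⟩ := (isRightBorder_iff hu hv).1 hb.1
    exact ⟨b, ⟨b.length, hlen, rfl, hb.unbordered⟩, ⟨hu, hv⟩, hbu, hbv⟩
  · rintro ⟨b, ⟨i, hi, rfl, -⟩, ⟨hu, hv⟩, hbu, hbv⟩
    exact ⟨⟨hu, hv⟩, b, (isRightBorder_iff hu hv).2 ⟨hbu, hbv, hi⟩⟩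

lemma card_pairsWithRightBorder (k n : ℕ) :
    #(pairsWithRightBorder k n) = ∑ i ∈ Icc 1 (n - 1), k ^ (2 * n - 2 * i) * UB k i := by
  rw [pairsWithRightBorder_eq_biUnion, card_biUnion, sum_biUnion]
  · refine sum_congr rfl fun i hi => ?_
    have hcard : ∀ b ∈ (Words k i).filter Unbordered,
        #(overlapPairs k n b) = k ^ (2 * n - 2 * i) := by
      intro b hb
      rw [mem_filter, mem_Words] at hb
      rw [card_overlapPairs (by rw [mem_Icc] at hi; omega), hb.1]
    rw [sum_congr rfl hcard, sum_const, smul_eq_mul, mul_comm, UB]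
  · intro i _ j _ hij
    simp only [Function.onFun, disjoint_left, mem_filter, mem_Words]
    rintro b ⟨rfl, -⟩ ⟨hb, -⟩
    exact hij hb
  · intro b hb b' hb' hne
    simp only [coe_biUnion, coe_filter, mem_coe, Set.mem_iUnion, mem_Icc, mem_Words] at hb hb'
    obtain ⟨i, ⟨hi, -⟩, rfl, hb⟩ := hb
    obtain ⟨j, ⟨hj, -⟩, rfl, hb'⟩ := hb'
    exact disjoint_overlapPairs hb hb' (List.ne_nil_of_length_pos hi)
      (List.ne_nil_of_length_pos hj) hne

lemma card_pairsWithRightBorder_eq_R_add_M (k n : ℕ) :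
    #(pairsWithRightBorder k n) = R k n + M k n := by
  have hsplit : ∀ p : List (Fin k) × List (Fin k),
      (∃ b, IsRightBorder p.1 p.2 b) ↔ RightBordered p.1 p.2 ∨ MutuallyBordered p.1 p.2 :=
    fun p => by unfold RightBordered MutuallyBordered; tauto
  rw [pairsWithRightBorder, filter_congr fun p _ => hsplit p, filter_or,
    card_union_of_disjoint, R, M]
  exact disjoint_filter.2 fun p _ hR hM => hR.2 hM.2

theorem stmt9_general (k n : ℕ) :
    (R k n : ℤ) =
      (∑ i ∈ Finset.Icc 1 (n - 1), (k : ℤ) ^ (2 * n - 2 * i) * (UB k i : ℤ)) - M k n := by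
  have h := (card_pairsWithRightBorder_eq_R_add_M k n).symm.trans (card_pairsWithRightBorder k n)
  rw [eq_sub_iff_add_eq]
  exact_mod_cast h

theorem stmt9 (k n : ℕ) (hk : 1 ≤ k) (hn : 1 ≤ n) :
    (R k n : ℤ) =
      (∑ i ∈ Finset.Icc 1 (n - 1), (k : ℤ) ^ (2 * n - 2 * i) * (UB k i : ℤ)) - M k n :=
  stmt9_general k n
end

section
/- Let k ≥ 2. Then the number of ordered pairs (u,v) of length-n words over Σ_k with lso(u,v) + lso(v,u) > n is o(k^{2n}); that is, lim_{n→∞} (#{(u,v) ∈ Σ_k^n × Σ_k^n : lso(u,v) + lso(v,u) > n})/k^{2n} = 0. -/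
open Classical Finset Filter

lemma mem_words_length {k n : ℕ} {w : List (Fin k)} (hw : w ∈ Words k n) :
    w.length = n := by
  simp only [Words, Finset.mem_image] at hw
  obtain ⟨f, _, rfl⟩ := hw
  simp

lemma card_words (k n : ℕ) : (Words k n).card = k ^ n := by
  rw [Words, Finset.card_image_of_injective _ List.ofFn_injective]
  simp

lemma lso_mem {k : ℕ} {u v : List (Fin k)} (h : 0 < lso u v) :
    ∃ b : List (Fin k), IsRightBorder u v b ∧ b.length = lso u v := by
  by_cases hne : {m | ∃ b : List (Fin k), IsRightBorder u v b ∧ b.length = m}.Nonempty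
  · exact Nat.sInf_mem hne
  · exfalso
    rw [Set.not_nonempty_iff_eq_empty] at hne
    simp only [lso, hne, Nat.sInf_empty] at h
    omega

lemma lso_lt {k n : ℕ} {u v : List (Fin k)} (hv : v.length = n) (h : 0 < lso u v) :
    lso u v < n := by
  obtain ⟨b, hb, hlen⟩ := lso_mem h
  obtain ⟨_, _, _, hpre, hne⟩ := hb
  have hle := hpre.length_le
  rcases lt_or_eq_of_le hle with h' | h'
  · omega
  · exact absurd (hpre.eq_of_length h') hne

lemma bad_subset (k n : ℕ) :
    ((Words k n ×ˢ Words k n).filter (fun p => n < lso p.1 p.2 + lso p.2 p.1)) ⊆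
      (Words k n ×ˢ (Finset.range (n+1) ×ˢ Finset.range (n+1))).image
        (fun x : List (Fin k) × ℕ × ℕ =>
          (x.1, x.1.drop (n - x.2.1) ++ (x.1.take x.2.2).drop (x.2.1 + x.2.2 - n))) := by
  intro p hp
  rw [Finset.mem_filter, Finset.mem_product] at hp
  obtain ⟨⟨hu, hv⟩, hlt⟩ := hp
  set u := p.1 with hu'
  set v := p.2 with hv'
  have hul : u.length = n := mem_words_length hu
  have hvl : v.length = n := mem_words_length hv
  set a := lso u v with ha
  set c := lso v u with hc
  -- both positive
  have hapos : 0 < a := by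
    by_contra hne
    push_neg at hne
    interval_cases a
    simp only [zero_add] at hlt
    have := lso_lt (n := n) hul (by omega : 0 < lso v u)
    omega
  have hcpos : 0 < c := by
    by_contra hne
    push_neg at hne
    interval_cases c
    have := lso_lt (n := n) hvl (by omega : 0 < lso u v)
    omega
  have haln : a < n := lso_lt hvl hapos
  have hcln : c < n := lso_lt hul hcpos
  obtain ⟨b, hb, hblen⟩ := lso_mem hapos
  obtain ⟨b', hb', hblen'⟩ := lso_mem hcpos
  obtain ⟨_, hbsuf, _, hbpre, _⟩ := hb
  obtain ⟨_, hbsuf', _, hbpre', _⟩ := hb'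
  -- h1 : v.take a = u.drop (n - a)
  have h1 : v.take a = u.drop (n - a) := by
    have e1 : b = v.take a := by rw [List.prefix_iff_eq_take.mp hbpre, hblen]
    have e2 : b = u.drop (n - a) := by
      rw [List.suffix_iff_eq_drop.mp hbsuf, hul, hblen]
    rw [← e1, ← e2]
  have h2 : v.drop (n - c) = u.take c := by
    have e1 : b' = u.take c := by rw [List.prefix_iff_eq_take.mp hbpre', hblen']
    have e2 : b' = v.drop (n - c) := by
      rw [List.suffix_iff_eq_drop.mp hbsuf', hvl, hblen']
    rw [← e2, ← e1]
  have hveq : v = u.drop (n - a) ++ (u.take c).drop (a + c - n) := by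
    have h3 : v.drop a = (u.take c).drop (a + c - n) := by
      rw [← h2, List.drop_drop]
      congr 1
      omega
    rw [← h1, ← h3, List.take_append_drop]
  rw [Finset.mem_image]
  refine ⟨(u, a, c), ?_, ?_⟩
  · rw [Finset.mem_product, Finset.mem_product, Finset.mem_range, Finset.mem_range]
    exact ⟨hu, Nat.lt_succ_of_lt haln, Nat.lt_succ_of_lt hcln⟩
  · exact Prod.ext rfl hveq.symm

lemma bad_card_le (k n : ℕ) :
    (((Words k n ×ˢ Words k n).filter (fun p => n < lso p.1 p.2 + lso p.2 p.1)).card : ℝ) ≤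
      (k : ℝ) ^ n * (n + 1) ^ 2 := by
  have h1 := Finset.card_le_card (bad_subset k n)
  have h2 := Finset.card_image_le (s := Words k n ×ˢ (Finset.range (n+1) ×ˢ Finset.range (n+1)))
    (f := fun x : List (Fin k) × ℕ × ℕ =>
      (x.1, x.1.drop (n - x.2.1) ++ (x.1.take x.2.2).drop (x.2.1 + x.2.2 - n)))
  have h3 : (Words k n ×ˢ (Finset.range (n+1) ×ˢ Finset.range (n+1))).card
      = k ^ n * ((n+1) * (n+1)) := by
    simp [Finset.card_product, card_words]
  have : (((Words k n ×ˢ Words k n).filter (fun p => n < lso p.1 p.2 + lso p.2 p.1)).card : ℕ)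
      ≤ k ^ n * ((n+1) * (n+1)) := by omega
  calc ((((Words k n ×ˢ Words k n).filter (fun p => n < lso p.1 p.2 + lso p.2 p.1)).card : ℕ) : ℝ)
      ≤ ((k ^ n * ((n+1) * (n+1)) : ℕ) : ℝ) := by exact_mod_cast this
    _ = (k : ℝ) ^ n * (n + 1) ^ 2 := by push_cast; ring

theorem stmt13 (k : ℕ) (hk : 2 ≤ k) :
    Filter.Tendsto
      (fun n : ℕ =>
        (((Words k n ×ˢ Words k n).filter
            (fun p => n < lso p.1 p.2 + lso p.2 p.1)).card : ℝ) / (k : ℝ) ^ (2 * n))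
      Filter.atTop (nhds 0) := by
  have hk1 : (1 : ℝ) < (k : ℝ) := by exact_mod_cast Nat.lt_of_lt_of_le one_lt_two hk
  have hk0 : (0 : ℝ) < (k : ℝ) := by linarith
  have hkn : ∀ n : ℕ, (0 : ℝ) < (k : ℝ) ^ n := fun n => pow_pos hk0 n
  -- the dominating sequence
  have hg : Filter.Tendsto (fun n : ℕ => ((n : ℝ) + 1) ^ 2 / (k : ℝ) ^ n)
      Filter.atTop (nhds 0) := by
    have h := tendsto_pow_const_div_const_pow_of_one_lt 2 hk1
    have h2 := (h.comp (tendsto_add_atTop_nat 1)).mul_const (k : ℝ)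
    rw [zero_mul] at h2
    convert h2 using 2 with n
    simp only [Function.comp_apply]
    push_cast
    rw [pow_succ]
    field_simp
    ring
  refine squeeze_zero (fun n => by positivity) (fun n => ?_) hg
  have hle := bad_card_le k n
  have key : (((Words k n ×ˢ Words k n).filter
      (fun p => n < lso p.1 p.2 + lso p.2 p.1)).card : ℝ) / (k : ℝ) ^ (2 * n)
      ≤ ((k : ℝ) ^ n * ((n : ℝ) + 1) ^ 2) / (k : ℝ) ^ (2 * n) := by
    gcongr
  refine key.trans (le_of_eq ?_)
  rw [two_mul, pow_add, mul_div_mul_left _ _ (hkn n).ne']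
end
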